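/- Under the hypotheses of the failed-line-search setting: φ with L-Lipschitz gradient, |f−φ| ≤ ε_f everywhere, η ∈ (0,1/2], direction d satisfying gᵀd ≤ −σ_d‖g‖^{1+p} and ‖d‖ ≤ κ_d‖g‖^{(1+p)/2}, gradient-accuracy bound ‖g−∇φ(x)‖ ≤ σ·ᾱ_p·‖∇φ(x)‖^{(1+p)/2} with σ ∈ (0,1), and (1−σ)‖∇φ(x)‖ ≤ ‖g‖ ≤ (1+σ)‖∇φ(x)‖ with ‖∇φ(x)‖ > 0; then failure of the Armijo-type condition at step size α (i.e. η α gᵀd ≤ f(x+αd) − f(x) − 2ε_f) implies (1−η)σ_d(1−σ)^{1+p}‖∇φ(x)‖^{1+p} ≤ κ_d σ ᾱ_p (1+σ)^{(1+p)/2}‖∇φ(x)‖^{1+p} + (L κ_d²(1+σ)^{1+p}/2)·α·‖∇φ(x)‖^{1+p}. -/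

import Mathlib

/-!
Failure of the noisy Armijo test at step `α`, together with `|f - φ| ≤ ε_f`, forces
`φ (x + α d) - φ x ≥ η α ⟪g, d⟫`, while the descent lemma bounds the same increase above by
`α ⟪∇φ x, d⟫ + L α² ‖d‖² / 2`. Writing `⟪∇φ x, d⟫ = ⟪g, d⟫ + ⟪∇φ x - g, d⟫` and dividing by `α`
gives `(1 - η) (-⟪g, d⟫) ≤ ‖g - ∇φ x‖ ‖d‖ + L α ‖d‖² / 2`; the sufficient-descent, direction-size
and gradient-accuracy conditions turn every term into a multiple of `‖∇φ x‖ ^ (1 + p)`.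
-/

open Set

open scoped NNReal

lemma image_one_le_of_deriv_le_add_mul {F F' : ℝ → ℝ} {a C : ℝ}
    (hF : ∀ t ∈ Icc (0 : ℝ) 1, HasDerivAt F (F' t) t) (hF' : ∀ t ∈ Ico (0 : ℝ) 1, F' t ≤ a + C * t) :
    F 1 ≤ F 0 + a + C / 2 := by
  have hB : ∀ t, HasDerivAt (fun t => F 0 + a * t + C / 2 * t ^ 2) (a + C * t) t := fun t =>
    ((((hasDerivAt_id t).const_mul a).const_add (F 0)).add
      ((hasDerivAt_pow 2 t).const_mul (C / 2))).congr_deriv (by norm_num; ring)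
  have := image_le_of_deriv_right_le_deriv_boundary
    (fun t ht => (hF t ht).continuousAt.continuousWithinAt)
    (fun t ht => (hF t (Ico_subset_Icc_self ht)).hasDerivWithinAt)
    (by simp) (fun t _ => (hB t).continuousAt.continuousWithinAt)
    (fun t _ => (hB t).hasDerivWithinAt) hF' (right_mem_Icc.2 zero_le_one)
  simpa using this

section InnerProductSpace

variable {E : Type*} [NormedAddCommGroup E] [InnerProductSpace ℝ E] [CompleteSpace E]
  {φ : E → ℝ} {K : ℝ≥0}

lemma image_add_le_of_lipschitzWith_gradient (hφ : Differentiable ℝ φ)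
    (hLip : LipschitzWith K (gradient φ)) (x v : E) :
    φ (x + v) ≤ φ x + inner ℝ (gradient φ x) v + K / 2 * ‖v‖ ^ 2 := by
  have hderiv : ∀ t : ℝ,
      HasDerivAt (fun t : ℝ => φ (x + t • v)) (inner ℝ (gradient φ (x + t • v)) v) t := by
    intro t
    have hline : HasDerivAt (fun t : ℝ => x + t • v) v t := by
      simpa using ((hasDerivAt_id t).smul_const v).const_add x
    have h := (hφ (x + t • v)).hasFDerivAt.comp_hasDerivAt t hline
    rwa [(hφ _).hasGradientAt.fderiv_apply] at h
  have hslope : ∀ t ∈ Ico (0 : ℝ) 1,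
      inner ℝ (gradient φ (x + t • v)) v ≤ inner ℝ (gradient φ x) v + K * ‖v‖ ^ 2 * t := by
    intro t ht
    have hgrad : ‖gradient φ (x + t • v) - gradient φ x‖ ≤ K * (t * ‖v‖) := by
      simpa [← dist_eq_norm, norm_smul, abs_of_nonneg ht.1] using hLip.dist_le_mul (x + t • v) x
    calc inner ℝ (gradient φ (x + t • v)) v
        = inner ℝ (gradient φ x) v + inner ℝ (gradient φ (x + t • v) - gradient φ x) v := by
          rw [inner_sub_left]; ring
      _ ≤ inner ℝ (gradient φ x) v + ‖gradient φ (x + t • v) - gradient φ x‖ * ‖v‖ := by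
          gcongr; exact real_inner_le_norm _ _
      _ ≤ inner ℝ (gradient φ x) v + K * (t * ‖v‖) * ‖v‖ := by gcongr
      _ = inner ℝ (gradient φ x) v + K * ‖v‖ ^ 2 * t := by ring
  have := image_one_le_of_deriv_le_add_mul (fun t _ => hderiv t) hslope
  simp only [zero_smul, add_zero, one_smul] at this
  linarith

lemma one_sub_mul_neg_inner_le_of_armijo_fails (hφ : Differentiable ℝ φ)
    (hLip : LipschitzWith K (gradient φ)) {x g d : E} {η α : ℝ} (hα : 0 < α)
    (hfail : η * α * inner ℝ g d ≤ φ (x + α • d) - φ x) :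
    (1 - η) * -inner ℝ g d ≤ ‖g - gradient φ x‖ * ‖d‖ + K * α / 2 * ‖d‖ ^ 2 := by
  have hdescent := image_add_le_of_lipschitzWith_gradient hφ hLip x (α • d)
  rw [real_inner_smul_right, norm_smul, Real.norm_of_nonneg hα.le] at hdescent
  have hinner : inner ℝ (gradient φ x) d - inner ℝ g d ≤ ‖g - gradient φ x‖ * ‖d‖ := by
    rw [← inner_sub_left, norm_sub_rev]
    exact real_inner_le_norm _ _
  have hscaled :
      α * ((1 - η) * -inner ℝ g d) ≤ α * (‖g - gradient φ x‖ * ‖d‖ + K * α / 2 * ‖d‖ ^ 2) := by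
    linarith [mul_le_mul_of_nonneg_left hinner hα.le]
  exact le_of_mul_le_mul_left hscaled hα

end InnerProductSpace

lemma Real.rpow_le_mul_rpow_of_le_mul {a b c s : ℝ} (ha : 0 ≤ a) (hb : 0 ≤ b) (hc : 0 ≤ c)
    (hs : 0 ≤ s) (h : c ≤ a * b) : c ^ s ≤ a ^ s * b ^ s :=
  mul_rpow ha hb ▸ rpow_le_rpow hc h hs

lemma Real.mul_rpow_le_rpow_of_mul_le {a b c s : ℝ} (ha : 0 ≤ a) (hb : 0 ≤ b) (hs : 0 ≤ s)
    (h : a * b ≤ c) : a ^ s * b ^ s ≤ c ^ s :=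
  mul_rpow ha hb ▸ rpow_le_rpow (mul_nonneg ha hb) h hs

lemma Real.rpow_half_mul_rpow_half {x q : ℝ} (hx : 0 ≤ x) (hq : q ≠ 0) :
    x ^ (q / 2) * x ^ (q / 2) = x ^ q := by
  rw [← rpow_add' hx (by rwa [add_halves]), add_halves]

lemma Real.mul_le_mul_rpow_of_le_mul_rpow_half {a b A B x q : ℝ} (hx : 0 ≤ x) (hq : q ≠ 0)
    (ha₀ : 0 ≤ a) (hb₀ : 0 ≤ b) (ha : a ≤ A * x ^ (q / 2)) (hb : b ≤ B * x ^ (q / 2)) :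
    a * b ≤ A * B * x ^ q :=
  calc a * b ≤ A * x ^ (q / 2) * (B * x ^ (q / 2)) := mul_le_mul ha hb hb₀ (ha₀.trans ha)
    _ = A * B * (x ^ (q / 2) * x ^ (q / 2)) := by ring
    _ = A * B * x ^ q := by rw [rpow_half_mul_rpow_half hx hq]

theorem stmt_4_general (n : ℕ) (φ f : EuclideanSpace ℝ (Fin n) → ℝ)
    (x g d : EuclideanSpace ℝ (Fin n)) (L ε_f η σ_d κ_d p σ ᾱ_p α : ℝ)
    (hL : 0 < L) (hφ : Differentiable ℝ φ)
    (hLip : LipschitzWith (Real.toNNReal L) (fun y => gradient φ y))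
    (hf : ∀ y, |f y - φ y| ≤ ε_f)
    (hη1 : η ≤ 1 / 2)
    (hσd0 : 0 < σ_d) (hκd : 1 ≤ κ_d) (hp : 0 ≤ p)
    (hσ0 : 0 < σ) (hσ1 : σ < 1) (hα : 0 < α)
    (hd1 : (inner ℝ g d : ℝ) ≤ -σ_d * ‖g‖ ^ (1 + p))
    (hd2 : ‖d‖ ≤ κ_d * ‖g‖ ^ ((1 + p) / 2))
    (hacc : ‖g - gradient φ x‖ ≤ σ * ᾱ_p * ‖gradient φ x‖ ^ ((1 + p) / 2))
    (hlo : (1 - σ) * ‖gradient φ x‖ ≤ ‖g‖)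
    (hhi : ‖g‖ ≤ (1 + σ) * ‖gradient φ x‖)
    (hfail : η * α * (inner ℝ g d : ℝ) ≤ f (x + α • d) - f x - 2 * ε_f) :
    (1 - η) * σ_d * (1 - σ) ^ (1 + p) * ‖gradient φ x‖ ^ (1 + p) ≤
      κ_d * σ * ᾱ_p * (1 + σ) ^ ((1 + p) / 2) * ‖gradient φ x‖ ^ (1 + p) +
        L * κ_d ^ 2 * (1 + σ) ^ (1 + p) / 2 * α * ‖gradient φ x‖ ^ (1 + p) := by
  set N := ‖gradient φ x‖
  set r := (1 + p) / 2
  have hq : 1 + p ≠ 0 := by linarith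
  have hr : 0 ≤ r := by positivity
  have h1mσ : 0 ≤ 1 - σ := by linarith
  have h1pσ : 0 ≤ 1 + σ := by linarith
  have hincrease : η * α * inner ℝ g d ≤ φ (x + α • d) - φ x := by
    linarith [(abs_le.1 (hf (x + α • d))).2, (abs_le.1 (hf x)).1]
  have hbound := one_sub_mul_neg_inner_le_of_armijo_fails hφ hLip hα hincrease
  rw [Real.coe_toNNReal L hL.le] at hbound
  have hsufficient : σ_d * ((1 - σ) ^ (1 + p) * N ^ (1 + p)) ≤ -inner ℝ g d := by
    calc σ_d * ((1 - σ) ^ (1 + p) * N ^ (1 + p)) ≤ σ_d * ‖g‖ ^ (1 + p) :=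
          mul_le_mul_of_nonneg_left
            (Real.mul_rpow_le_rpow_of_mul_le h1mσ (norm_nonneg _) (by linarith) hlo) hσd0.le
      _ ≤ -inner ℝ g d := by linarith
  have hd : ‖d‖ ≤ κ_d * (1 + σ) ^ r * N ^ r := by
    rw [mul_assoc]
    exact hd2.trans <| mul_le_mul_of_nonneg_left
      (Real.rpow_le_mul_rpow_of_le_mul h1pσ (norm_nonneg _) (norm_nonneg _) hr hhi) (by linarith)
  have herr := Real.mul_le_mul_rpow_of_le_mul_rpow_half (norm_nonneg _) hq
    (norm_nonneg _) (norm_nonneg _) hacc hd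
  have hstep := Real.mul_le_mul_rpow_of_le_mul_rpow_half (norm_nonneg _) hq
    (norm_nonneg _) (norm_nonneg _) hd hd
  rw [← Real.rpow_half_mul_rpow_half h1pσ hq]
  linarith [mul_le_mul_of_nonneg_left hsufficient (by linarith : 0 ≤ 1 - η),
    mul_le_mul_of_nonneg_left hstep (by positivity : 0 ≤ L * α / 2)]

theorem stmt_4 (n : ℕ) (φ f : EuclideanSpace ℝ (Fin n) → ℝ)
    (x g d : EuclideanSpace ℝ (Fin n)) (L ε_f η σ_d κ_d p σ ᾱ_p α : ℝ)
    (hL : 0 < L) (hφ : Differentiable ℝ φ)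
    (hLip : LipschitzWith (Real.toNNReal L) (fun y => gradient φ y))
    (hεf : 0 ≤ ε_f) (hf : ∀ y, |f y - φ y| ≤ ε_f)
    (hη0 : 0 < η) (hη1 : η ≤ 1 / 2)
    (hσd0 : 0 < σ_d) (hσd1 : σ_d ≤ 1) (hκd : 1 ≤ κ_d) (hp : 0 ≤ p)
    (hσ0 : 0 < σ) (hσ1 : σ < 1) (hᾱp : 0 < ᾱ_p) (hα : 0 < α)
    (hd1 : (inner ℝ g d : ℝ) ≤ -σ_d * ‖g‖ ^ (1 + p))
    (hd2 : ‖d‖ ≤ κ_d * ‖g‖ ^ ((1 + p) / 2))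
    (hacc : ‖g - gradient φ x‖ ≤ σ * ᾱ_p * ‖gradient φ x‖ ^ ((1 + p) / 2))
    (hlo : (1 - σ) * ‖gradient φ x‖ ≤ ‖g‖)
    (hhi : ‖g‖ ≤ (1 + σ) * ‖gradient φ x‖)
    (hpos : 0 < ‖gradient φ x‖)
    (hfail : η * α * (inner ℝ g d : ℝ) ≤ f (x + α • d) - f x - 2 * ε_f) :
    (1 - η) * σ_d * (1 - σ) ^ (1 + p) * ‖gradient φ x‖ ^ (1 + p) ≤
      κ_d * σ * ᾱ_p * (1 + σ) ^ ((1 + p) / 2) * ‖gradient φ x‖ ^ (1 + p) +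
        L * κ_d ^ 2 * (1 + σ) ^ (1 + p) / 2 * α * ‖gradient φ x‖ ^ (1 + p) :=
  stmt_4_general n φ f x g d L ε_f η σ_d κ_d p σ ᾱ_p α hL hφ hLip hf hη1 hσd0 hκd hp hσ0 hσ1 hα hd1
    hd2 hacc hlo hhi hfail
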